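/- Let M be a multiset over α, N and N' multisets over β, and f : α → K, g : β → K key functions. Then card (J(M,N) − J(M,N')) ≤ mf f M * card (N − N'), and consequently max (card (J(M,N) − J(M,N'))) (card (J(M,N') − J(M,N))) ≤ mf f M * max (card (N − N')) (card (N' − N)). (This is the non-self-join case of the paper's Lemma 2: when only one input relation changes, each changed row of N produces at most mf f M changed rows in the joined relation.) -/

import Mathlib

/-- Maximum frequency of a join key: the max over values of the multiplicity in `M.map f`. -/
def mf {α K : Type*} [DecidableEq K] (f : α → K) (M : Multiset α) : ℕ :=
  (M.map f).toFinset.sup fun v => (M.map f).count v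

/-- Equijoin of two multisets on key functions `f` and `g`. -/
def equijoin {α β K : Type*} [DecidableEq K] (f : α → K) (g : β → K)
    (M : Multiset α) (N : Multiset β) : Multiset (α × β) :=
  M.bind fun a => (N.filter fun b => f a = g b).map (Prod.mk a)

lemma count_le_mf {α K : Type*} [DecidableEq K] (f : α → K) (M : Multiset α) (v : K) :
    (M.map f).count v ≤ mf f M := by
  by_cases h : v ∈ (M.map f).toFinset
  · exact Finset.le_sup (f := fun v => (M.map f).count v) h
  · rw [Multiset.count_eq_zero_of_notMem (by simpa using h)]
    exact Nat.zero_le _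

lemma sum_map_ite {α : Type*} (p : α → Prop) [DecidablePred p] (M : Multiset α) :
    (M.map fun a => if p a then 1 else 0).sum = M.countP p := by
  induction M using Multiset.induction with
  | empty => simp
  | cons a s ih => by_cases h : p a <;> simp [h, ih, Multiset.countP_cons, Nat.add_comm]

lemma card_equijoin_le {α β K : Type*} [DecidableEq K] (f : α → K) (g : β → K)
    (M : Multiset α) (P : Multiset β) :
    Multiset.card (equijoin f g M P) ≤ mf f M * Multiset.card P := by
  induction P using Multiset.induction with
  | empty => simp [equijoin]
  | cons b P ih =>
    have hsplit : equijoin f g M (b ::ₘ P)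
        = equijoin f g M ({b} : Multiset β) + equijoin f g M P := by
      rw [show b ::ₘ P = ({b} : Multiset β) + P by simp]
      simp only [equijoin, Multiset.filter_add, Multiset.map_add, Multiset.bind_add]
    have h1 : Multiset.card (equijoin f g M ({b} : Multiset β)) ≤ mf f M := by
      have : Multiset.card (equijoin f g M ({b} : Multiset β))
          = (M.map f).count (g b) := by
        simp only [equijoin, Multiset.card_bind]
        rw [Multiset.count_map]
        have h1 : ∀ a : α, (Multiset.card ∘ fun a => (Multiset.filter (fun x => f a = g x) ({b} : Multiset β)).map (Prod.mk a)) a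
            = if g b = f a then 1 else 0 := by
          intro a
          by_cases h : f a = g b <;> simp [Multiset.filter_singleton, h, eq_comm]
        calc (M.map (Multiset.card ∘ fun a => (Multiset.filter (fun x => f a = g x) ({b} : Multiset β)).map (Prod.mk a))).sum
            = (M.map fun a => if g b = f a then 1 else 0).sum := by
              congr 1; exact Multiset.map_congr rfl fun a _ => h1 a
          _ = Multiset.countP (fun a => g b = f a) M := sum_map_ite _ M
          _ = Multiset.card (Multiset.filter (fun a => g b = f a) M) := Multiset.countP_eq_card_filter _ _
      rw [this]; exact count_le_mf f M (g b)
    calc Multiset.card (equijoin f g M (b ::ₘ P))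
        = Multiset.card (equijoin f g M ({b} : Multiset β)) + Multiset.card (equijoin f g M P) := by
          rw [hsplit, Multiset.card_add]
      _ ≤ mf f M + mf f M * Multiset.card P := Nat.add_le_add h1 ih
      _ = mf f M * Multiset.card (b ::ₘ P) := by
          rw [Multiset.card_cons, Nat.mul_succ]; ring

lemma equijoin_sub_le {α β K : Type*} [DecidableEq α] [DecidableEq β] [DecidableEq K]
    (f : α → K) (g : β → K) (M : Multiset α) (N N' : Multiset β) :
    equijoin f g M N - equijoin f g M N' ≤ equijoin f g M (N - N') := by
  rw [tsub_le_iff_right]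
  have hN : N ≤ N - N' + N' := le_tsub_add
  have : equijoin f g M N ≤ equijoin f g M (N - N' + N') := by
    obtain ⟨C, hC⟩ := Multiset.le_iff_exists_add.mp hN
    rw [hC]
    simp only [equijoin, Multiset.filter_add, Multiset.map_add, Multiset.bind_add]
    exact Multiset.le_add_right _ _
  refine this.trans ?_
  rw [show equijoin f g M (N - N' + N') = equijoin f g M (N - N') + equijoin f g M N' by
    simp only [equijoin, Multiset.filter_add, Multiset.map_add, Multiset.bind_add]]

lemma key {α β K : Type*} [DecidableEq α] [DecidableEq β] [DecidableEq K]
    (f : α → K) (g : β → K) (M : Multiset α) (N N' : Multiset β) :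
    Multiset.card (equijoin f g M N - equijoin f g M N') ≤ mf f M * Multiset.card (N - N') :=
  (Multiset.card_le_card (equijoin_sub_le f g M N N')).trans (card_equijoin_le f g M _)

theorem stmt5 {α β K : Type*} [DecidableEq α] [DecidableEq β] [DecidableEq K]
    (M : Multiset α) (N N' : Multiset β) (f : α → K) (g : β → K) :
    Multiset.card (equijoin f g M N - equijoin f g M N') ≤ mf f M * Multiset.card (N - N') ∧
    max (Multiset.card (equijoin f g M N - equijoin f g M N'))
        (Multiset.card (equijoin f g M N' - equijoin f g M N))
      ≤ mf f M * max (Multiset.card (N - N')) (Multiset.card (N' - N)) := by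
  refine ⟨key f g M N N', ?_⟩
  apply max_le
  · exact (key f g M N N').trans (Nat.mul_le_mul_left _ (le_max_left _ _))
  · exact (key f g M N' N).trans (Nat.mul_le_mul_left _ (le_max_right _ _))
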